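/- arXiv:1703.05011 — 2 statements merged into one kernel-verified Lean document; each statement's English description precedes it below -/
import Mathlib

section
/- The parallel composition of automata realizes the parallel composition of languages: for NFAs A1 over Σ1 and A2 over Σ2, L(A1 ∥ A2) = L(A1) ∥ L(A2) and L_m(A1 ∥ A2) = L_m(A1) ∥ L_m(A2). -/
open scoped Classical in
noncomputable def proj {σ : Type*} (S : Set σ) (w : List σ) : List σ :=
  w.filter (fun a => decide (a ∈ S))

noncomputable def par {σ : Type*} (S1 S2 : Set σ) (L1 L2 : Set (List σ)) : Set (List σ) :=
  {w | (∀ a ∈ w, a ∈ S1 ∪ S2) ∧ proj S1 w ∈ L1 ∧ proj S2 w ∈ L2}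

/-- An NFA together with its alphabet. -/
structure NFA' (Q σ : Type*) where
  alph : Set σ
  δ : Q → σ → Set Q
  I : Set Q
  F : Set Q

def NFA'.stepSet {Q σ : Type*} (A : NFA' Q σ) (S : Set Q) (a : σ) : Set Q :=
  ⋃ q ∈ S, A.δ q a

def NFA'.evalFrom {Q σ : Type*} (A : NFA' Q σ) (S : Set Q) (w : List σ) : Set Q :=
  w.foldl A.stepSet S

def NFA'.lang {Q σ : Type*} (A : NFA' Q σ) : Set (List σ) :=
  {w | (A.evalFrom A.I w).Nonempty}

def NFA'.langM {Q σ : Type*} (A : NFA' Q σ) : Set (List σ) :=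
  {w | (A.evalFrom A.I w ∩ A.F).Nonempty}

/-- An NFA is well-formed if it has transitions only under events of its alphabet. -/
def NFA'.WellFormed {Q σ : Type*} (A : NFA' Q σ) : Prop :=
  ∀ q e, e ∉ A.alph → A.δ q e = ∅

open scoped Classical in
/-- Parallel composition of NFAs: shared events synchronize, private events interleave. -/
noncomputable def parNFA {Q1 Q2 σ : Type*} (A : NFA' Q1 σ) (B : NFA' Q2 σ) :
    NFA' (Q1 × Q2) σ where
  alph := A.alph ∪ B.alph
  δ := fun p e =>
    if e ∈ A.alph ∧ e ∈ B.alph then A.δ p.1 e ×ˢ B.δ p.2 e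
    else if e ∈ A.alph then A.δ p.1 e ×ˢ {p.2}
    else if e ∈ B.alph then {p.1} ×ˢ B.δ p.2 e
    else ∅
  I := A.I ×ˢ B.I
  F := A.F ×ˢ B.F

/-! Started in a product `S1 ×ˢ S2`, the subset construction of `parNFA A B` stays a product
along every word over `A.alph ∪ B.alph`: it is the set reached by `A` on the projection of the
word to `A.alph` times the set reached by `B` on its projection to `B.alph`. On any other word it
empties. Both language identities are read off from this. -/

namespace NFA'

variable {Q σ : Type*} (A : NFA' Q σ)

lemma evalFrom_cons (S : Set Q) (a : σ) (w : List σ) :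
    A.evalFrom S (a :: w) = A.evalFrom (A.stepSet S a) w := rfl

lemma evalFrom_append (S : Set Q) (u v : List σ) :
    A.evalFrom S (u ++ v) = A.evalFrom (A.evalFrom S u) v :=
  List.foldl_append

@[simp]
lemma stepSet_empty (a : σ) : A.stepSet ∅ a = ∅ := by
  simp [stepSet]

@[simp]
lemma evalFrom_empty (w : List σ) : A.evalFrom ∅ w = ∅ := by
  induction w with
  | nil => rfl
  | cons a w ih => rw [evalFrom_cons, stepSet_empty, ih]

end NFA'

lemma proj_append {σ : Type*} (S : Set σ) (u v : List σ) :
    proj S (u ++ v) = proj S u ++ proj S v :=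
  List.filter_append ..

section parNFA

variable {Q1 Q2 σ : Type*} (A : NFA' Q1 σ) (B : NFA' Q2 σ)

-- Writing the step through `proj _ [a]` treats synchronized and private letters uniformly.
lemma parNFA_stepSet_prod {a : σ} (ha : a ∈ A.alph ∪ B.alph) (S1 : Set Q1) (S2 : Set Q2) :
    (parNFA A B).stepSet (S1 ×ˢ S2) a =
      A.evalFrom S1 (proj A.alph [a]) ×ˢ B.evalFrom S2 (proj B.alph [a]) := by
  ext ⟨x, y⟩
  by_cases h1 : a ∈ A.alph <;> by_cases h2 : a ∈ B.alph <;>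
    simp [NFA'.stepSet, NFA'.evalFrom, parNFA, proj, h1, h2] at ha ⊢ <;> aesop

lemma parNFA_stepSet_of_notMem {a : σ} (ha : a ∉ A.alph ∪ B.alph) (S : Set (Q1 × Q2)) :
    (parNFA A B).stepSet S a = ∅ := by
  simp only [Set.mem_union, not_or] at ha
  simp [NFA'.stepSet, parNFA, ha.1, ha.2]

open scoped Classical in
lemma parNFA_evalFrom_prod (w : List σ) (S1 : Set Q1) (S2 : Set Q2) :
    (parNFA A B).evalFrom (S1 ×ˢ S2) w =
      if ∀ a ∈ w, a ∈ A.alph ∪ B.alph then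
        A.evalFrom S1 (proj A.alph w) ×ˢ B.evalFrom S2 (proj B.alph w)
      else ∅ := by
  induction w generalizing S1 S2 with
  | nil => rfl
  | cons a w ih =>
    rw [NFA'.evalFrom_cons]
    by_cases ha : a ∈ A.alph ∪ B.alph
    · rw [parNFA_stepSet_prod A B ha, ih]
      simp only [List.forall_mem_cons, ha, true_and, ← NFA'.evalFrom_append, ← proj_append,
        List.singleton_append]
    · rw [parNFA_stepSet_of_notMem A B ha, NFA'.evalFrom_empty,
        if_neg fun h => ha (h a List.mem_cons_self)]

end parNFA

theorem parNFA_lang_general {Q1 Q2 σ : Type*} (A : NFA' Q1 σ) (B : NFA' Q2 σ) :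
    (parNFA A B).lang = par A.alph B.alph A.lang B.lang ∧
    (parNFA A B).langM = par A.alph B.alph A.langM B.langM := by
  have hI : (parNFA A B).I = A.I ×ˢ B.I := rfl
  have hF : (parNFA A B).F = A.F ×ˢ B.F := rfl
  constructor <;> ext w <;>
    simp only [NFA'.lang, NFA'.langM, par, Set.mem_ofPred_eq, hI, hF, parNFA_evalFrom_prod] <;>
    split_ifs with hw <;>
    simp only [Set.prod_inter_prod, Set.prod_nonempty_iff, Set.empty_inter,
      Set.not_nonempty_empty] <;>
    tauto

/-- the parallel composition of automata realizes the parallel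
composition of their languages. -/
theorem parNFA_lang {Q1 Q2 σ : Type*} (A : NFA' Q1 σ) (B : NFA' Q2 σ)
    (hA : A.WellFormed) (hB : B.WellFormed) :
    (parNFA A B).lang = par A.alph B.alph A.lang B.lang ∧
    (parNFA A B).langM = par A.alph B.alph A.langM B.langM :=
  parNFA_lang_general A B
end

section
/- In the construction of Theorem 1, the DFA A built from a directed graph G = (V, E, s, t) is nonblocking if and only if t is not reachable from s in G. -/
def cl {α : Type*} (L : Set (List α)) : Set (List α) := {w | ∃ u, w ++ u ∈ L}

structure DFA' (Q σ : Type*) where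
  δ : Q → σ → Option Q
  q0 : Q
  F : Set Q

def DFA'.evalFrom {Q σ : Type*} (A : DFA' Q σ) (o : Option Q) (w : List σ) : Option Q :=
  w.foldl (fun o a => o.bind fun q => A.δ q a) o

def DFA'.lang {Q σ : Type*} (A : DFA' Q σ) : Set (List σ) :=
  {w | (A.evalFrom (some A.q0) w).isSome}

def DFA'.langM {Q σ : Type*} (A : DFA' Q σ) : Set (List σ) :=
  {w | ∃ q ∈ A.F, A.evalFrom (some A.q0) w = some q}

open scoped Classical in
/-- The DFA built from a directed graph `(V, E)` with source `s` and target `t`: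
states are `V` plus a fresh non-marked state `t'` (modeled as `none`), every edge
gives one transition under its own distinct label (the edge itself), and one
extra transition, under a fresh label, leads from `t` to `t'`. All states of `V`
are marked, `t'` is not. -/
noncomputable def graphDFA {V : Type*} (E : Set (V × V)) (s t : V) :
    DFA' (Option V) ((V × V) ⊕ Unit) where
  δ := fun q e =>
    match q, e with
    | some u, Sum.inl p => if p.1 = u ∧ p ∈ E then some (some p.2) else none
    | some u, Sum.inr _ => if u = t then some none else none
    | none, _ => none
  q0 := some s
  F := {q | q ≠ none}

/-! In any DFA, `cl L_m = L` says exactly that every reachable state is coreachable. In the graph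
automaton every state of `V` is marked, hence coreachable, while `t'` is a dead unmarked state. So
the automaton is nonblocking iff `t'` is unreachable, and since `t'` is entered only from `t`,
iff `t` is unreachable from `s`. -/

namespace DFA'

variable {Q σ : Type*} (A : DFA' Q σ)

def Reachable (q : Q) : Prop := ∃ w, A.evalFrom (some A.q0) w = some q

def Coreachable (q : Q) : Prop := ∃ u, ∃ q' ∈ A.F, A.evalFrom (some q) u = some q'

@[simp]
lemma evalFrom_nil (o : Option Q) : A.evalFrom o [] = o := rfl

@[simp]
lemma evalFrom_cons (o : Option Q) (a : σ) (w : List σ) :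
    A.evalFrom o (a :: w) = A.evalFrom (o.bind (A.δ · a)) w := rfl

@[simp]
lemma evalFrom_none (w : List σ) : A.evalFrom none w = none := by
  induction w with
  | nil => rfl
  | cons a w ih => exact ih

lemma evalFrom_append (o : Option Q) (w u : List σ) :
    A.evalFrom o (w ++ u) = A.evalFrom (A.evalFrom o w) u :=
  List.foldl_append

lemma cl_langM_subset_lang : cl A.langM ⊆ A.lang := by
  rintro w ⟨u, q, -, hq⟩
  rw [evalFrom_append] at hq
  show (A.evalFrom (some A.q0) w).isSome
  cases hw : A.evalFrom (some A.q0) w with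
  | none => simp [hw] at hq
  | some _ => rfl

theorem cl_langM_eq_lang_iff :
    cl A.langM = A.lang ↔ ∀ q, A.Reachable q → A.Coreachable q := by
  rw [Set.Subset.antisymm_iff, and_iff_right A.cl_langM_subset_lang]
  constructor
  · rintro hsub q ⟨w, hw⟩
    obtain ⟨u, q', hq'F, hq'⟩ := hsub (show (A.evalFrom (some A.q0) w).isSome by simp [hw])
    exact ⟨u, q', hq'F, by rwa [evalFrom_append, hw] at hq'⟩
  · intro hco w hw
    obtain ⟨q, hq⟩ := Option.isSome_iff_exists.mp hw
    obtain ⟨u, q', hq'F, hq'⟩ := hco q ⟨w, hq⟩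
    exact ⟨u, q', hq'F, by rw [evalFrom_append, hq, hq']⟩

end DFA'

section graphDFA

/- Runs of `graphDFA` live in `Option (Option V)`: the outer `none` is a blocked run,
`some none` is the run that has entered `t'`. -/

variable {V : Type*} {E : Set (V × V)} {s t : V}

lemma graphDFA_δ_eq_some_some {u v : V} {a : (V × V) ⊕ Unit}
    (h : (graphDFA E s t).δ (some u) a = some (some v)) : (u, v) ∈ E := by
  rcases a with ⟨x, y⟩ | _ <;> simp only [graphDFA] at h <;> split_ifs at h with hxy <;> cases h
  exact hxy.1 ▸ hxy.2

lemma graphDFA_δ_eq_some_none {u : V} {a : (V × V) ⊕ Unit}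
    (h : (graphDFA E s t).δ (some u) a = some none) : u = t := by
  rcases a with ⟨x, y⟩ | _ <;> simp only [graphDFA] at h <;> split_ifs at h with hu <;> cases h
  exact hu

lemma eq_none_of_graphDFA_evalFrom_some_none {u : List ((V × V) ⊕ Unit)} {q : Option V}
    (h : (graphDFA E s t).evalFrom (some none) u = some q) : q = none := by
  cases u with
  | nil => exact (Option.some.inj h).symm
  | cons a u => simp [graphDFA] at h

lemma reflTransGen_of_graphDFA_evalFrom_eq_some_none {u : V} {w : List ((V × V) ⊕ Unit)}
    (h : (graphDFA E s t).evalFrom (some (some u)) w = some none) :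
    Relation.ReflTransGen (fun a b => (a, b) ∈ E) u t := by
  induction w generalizing u with
  | nil => cases h
  | cons a w ih =>
    rw [DFA'.evalFrom_cons, Option.bind_some] at h
    rcases hδ : (graphDFA E s t).δ (some u) a with _ | _ | v
    · simp [hδ] at h
    · rw [graphDFA_δ_eq_some_none hδ]
    · rw [hδ] at h
      exact .head (graphDFA_δ_eq_some_some hδ) (ih h)

lemma exists_graphDFA_evalFrom_of_reflTransGen {u v : V}
    (h : Relation.ReflTransGen (fun a b => (a, b) ∈ E) u v) :
    ∃ w, (graphDFA E s t).evalFrom (some (some u)) w = some (some v) := by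
  induction h using Relation.ReflTransGen.head_induction_on with
  | refl => exact ⟨[], rfl⟩
  | @head a c hac _ ih =>
    obtain ⟨w, hw⟩ := ih
    exact ⟨Sum.inl (a, c) :: w, by simpa [graphDFA, hac] using hw⟩

lemma graphDFA_reachable_none_iff :
    (graphDFA E s t).Reachable none ↔ Relation.ReflTransGen (fun u v => (u, v) ∈ E) s t := by
  constructor
  · rintro ⟨w, hw⟩
    exact reflTransGen_of_graphDFA_evalFrom_eq_some_none hw
  · intro h
    obtain ⟨w, hw⟩ := exists_graphDFA_evalFrom_of_reflTransGen (s := s) (t := t) h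
    refine ⟨w ++ [Sum.inr ()], ?_⟩
    change (graphDFA E s t).evalFrom (some (some s)) _ = _
    rw [DFA'.evalFrom_append, hw]
    simp [graphDFA]

lemma graphDFA_coreachable_iff {q : Option V} : (graphDFA E s t).Coreachable q ↔ q ≠ none := by
  constructor
  · rintro ⟨u, q', hq'F, hq'⟩ rfl
    exact hq'F (eq_none_of_graphDFA_evalFrom_some_none hq')
  · intro hq
    exact ⟨[], q, hq, rfl⟩

end graphDFA

/-- the DFA built from the graph is nonblocking iff `t` is not
reachable from `s` in the graph. -/
theorem graphDFA_nonblocking_iff {V : Type*} (E : Set (V × V)) (s t : V) :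
    cl (graphDFA E s t).langM = (graphDFA E s t).lang ↔
      ¬ Relation.ReflTransGen (fun u v => (u, v) ∈ E) s t := by
  rw [DFA'.cl_langM_eq_lang_iff, ← graphDFA_reachable_none_iff]
  simp only [graphDFA_coreachable_iff]
  constructor
  · exact fun h hnone => h none hnone rfl
  · rintro h q hq rfl
    exact h hq
end
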